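/- Let F be a finitely supported sequence in the open unit disc with nonlinear Fourier transform (a, b). Then the meromorphic extension of a to the Riemann sphere has no zeros in the closed exterior disc {z : |z| > 1} ∪ {∞}. -/

import Mathlib

/-- The transfer matrix `T_n(z) = (1−|F_n|²)^{-1/2}·[[1, F_n zⁿ],[conj(F_n) z⁻ⁿ, 1]]`. -/
noncomputable def transfer (F : ℤ → ℂ) (z : ℂ) (n : ℤ) : Matrix (Fin 2) (Fin 2) ℂ :=
  (((Real.sqrt (1 - ‖F n‖ ^ 2))⁻¹ : ℝ) : ℂ) •
    !![1, F n * z ^ n; (starRingEnd ℂ) (F n) * z ^ (-n), 1]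

/-- The nonlinear Fourier transform matrix (ordered product over `s`). -/
noncomputable def nlft (F : ℤ → ℂ) (s : Finset ℤ) (z : ℂ) : Matrix (Fin 2) (Fin 2) ℂ :=
  ((s.sort (· ≤ ·)).map (transfer F z)).prod


/-!
Build the product from the right and track its first column `(u, v)`. For `|z| ≥ 1` and `n` below
all indices, the inequality `|zⁿ v| < |u|` holds for the empty product `(1, 0)` and survives
left multiplication by `T_k`, since `|u + f v|² - |f̄ u + v|² = (1 - |f|²)(|u|² - |v|²)`;
hence `a(z) = u ≠ 0`. As `z → ∞`, every monomial of `a` containing some `F_j` carries a negative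
power of `z`, so `a(z) → ∏ₖ (1 - |F_k|²)^{-1/2} ≠ 0`.
-/
open Filter Topology Bornology ComplexConjugate

noncomputable def transferScale (F : ℤ → ℂ) (n : ℤ) : ℝ :=
  (Real.sqrt (1 - ‖F n‖ ^ 2))⁻¹

noncomputable def transferProd (F : ℤ → ℂ) (l : List ℤ) (z : ℂ) : Matrix (Fin 2) (Fin 2) ℂ :=
  (l.map (transfer F z)).prod

lemma nlft_eq_transferProd (F : ℤ → ℂ) (s : Finset ℤ) (z : ℂ) :
    nlft F s z = transferProd F (s.sort (· ≤ ·)) z :=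
  rfl

lemma transferScale_pos {F : ℤ → ℂ} {n : ℤ} (hF : ‖F n‖ < 1) : 0 < transferScale F n := by
  have : 0 < 1 - ‖F n‖ ^ 2 := by nlinarith [norm_nonneg (F n)]
  unfold transferScale
  positivity

lemma tendsto_zpow_cobounded_zero {𝕜 : Type*} [NormedDivisionRing 𝕜] {m : ℤ} (hm : m < 0) :
    Tendsto (fun z : 𝕜 => z ^ m) (cobounded 𝕜) (𝓝 0) := by
  rw [tendsto_zero_iff_norm_tendsto_zero]
  simpa only [Function.comp_def, norm_zpow] using
    (tendsto_zpow_atTop_zero hm).comp tendsto_norm_cobounded_atTop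

lemma normSq_add_mul_sub_normSq_conj_mul_add (f u v : ℂ) :
    Complex.normSq (u + f * v) - Complex.normSq (conj f * u + v) =
      (1 - Complex.normSq f) * (Complex.normSq u - Complex.normSq v) := by
  simp only [Complex.normSq_apply, Complex.add_re, Complex.add_im, Complex.mul_re,
    Complex.mul_im, Complex.conj_re, Complex.conj_im]
  ring

lemma norm_conj_mul_add_lt_norm_add_mul {f u v : ℂ} (hf : ‖f‖ < 1) (h : ‖v‖ < ‖u‖) :
    ‖conj f * u + v‖ < ‖u + f * v‖ := by
  have hf' : Complex.normSq f < 1 := by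
    rw [← Complex.sq_norm]; nlinarith [norm_nonneg f]
  have h' : Complex.normSq v < Complex.normSq u := by
    rw [← Complex.sq_norm, ← Complex.sq_norm]; nlinarith [norm_nonneg v]
  have key := normSq_add_mul_sub_normSq_conj_mul_add f u v
  rw [← sq_lt_sq₀ (norm_nonneg _) (norm_nonneg _), Complex.sq_norm, Complex.sq_norm]
  nlinarith [mul_pos (sub_pos.2 hf') (sub_pos.2 h')]

section transferProd

variable {F : ℤ → ℂ} {z : ℂ}

@[simp]
lemma transferProd_nil : transferProd F [] z = 1 :=
  rfl

lemma transferProd_cons (k : ℤ) (l : List ℤ) :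
    transferProd F (k :: l) z = transfer F z k * transferProd F l z := by
  simp [transferProd]

lemma transfer_mul_apply_zero_zero (k : ℤ) (G : Matrix (Fin 2) (Fin 2) ℂ) :
    (transfer F z k * G) 0 0 = transferScale F k * (G 0 0 + F k * (z ^ k * G 1 0)) := by
  simp [transfer, transferScale, Matrix.mul_apply, Fin.sum_univ_two]
  ring

lemma zpow_mul_transfer_mul_apply_one_zero (hz : z ≠ 0) (n k : ℤ)
    (G : Matrix (Fin 2) (Fin 2) ℂ) :
    z ^ n * (transfer F z k * G) 1 0 =
      transferScale F k * (z ^ (n - k) * (conj (F k) * G 0 0 + z ^ k * G 1 0)) := by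
  unfold transfer transferScale
  simp [Matrix.mul_apply, Fin.sum_univ_two, zpow_sub₀ hz]
  field_simp

theorem norm_zpow_mul_transferProd_one_zero_lt (hF : ∀ n, ‖F n‖ < 1) (hz : 1 ≤ ‖z‖)
    {l : List ℤ} (hl : l.Pairwise (· ≤ ·)) {n : ℤ} (hn : ∀ k ∈ l, n ≤ k) :
    ‖z ^ n * transferProd F l z 1 0‖ < ‖transferProd F l z 0 0‖ := by
  induction l generalizing n with
  | nil => simp
  | cons k t ih =>
    rw [List.pairwise_cons] at hl
    have hz0 : z ≠ 0 := norm_pos_iff.1 (one_pos.trans_le hz)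
    have hc : 0 < transferScale F k := transferScale_pos (hF k)
    have hshift : ‖z ^ (n - k)‖ ≤ 1 := by
      rw [norm_zpow]
      exact zpow_le_one_of_nonpos₀ hz (by linarith [hn k (by simp)])
    have hstep := norm_conj_mul_add_lt_norm_add_mul (hF k) (ih hl.2 hl.1)
    rw [transferProd_cons, zpow_mul_transfer_mul_apply_one_zero hz0,
      transfer_mul_apply_zero_zero]
    simp only [norm_mul]
    exact mul_lt_mul_of_pos_left ((mul_le_of_le_one_left (norm_nonneg _) hshift).trans_lt hstep)
      (norm_pos_iff.2 (Complex.ofReal_ne_zero.2 hc.ne'))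

theorem tendsto_transferProd {l : List ℤ} (hl : l.Pairwise (· < ·)) {n : ℤ}
    (hn : ∀ k ∈ l, n < k) :
    Tendsto (fun z => transferProd F l z 0 0) (cobounded ℂ)
        (𝓝 (l.map fun k => (transferScale F k : ℂ)).prod) ∧
      Tendsto (fun z => z ^ n * transferProd F l z 1 0) (cobounded ℂ) (𝓝 0) := by
  induction l generalizing n with
  | nil => simp
  | cons k t ih =>
    rw [List.pairwise_cons] at hl
    obtain ⟨hG00, hG10⟩ := ih hl.2 hl.1
    have hshift := tendsto_zpow_cobounded_zero (𝕜 := ℂ) (sub_neg.2 (hn k (by simp)))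
    simp only [transferProd_cons, transfer_mul_apply_zero_zero, List.map_cons, List.prod_cons]
    constructor
    · simpa using (hG00.add (hG10.const_mul (F k))).const_mul (transferScale F k : ℂ)
    · refine Tendsto.congr' ?_ (by simpa using
        ((hshift.mul ((hG00.const_mul (conj (F k))).add hG10)).const_mul
          (transferScale F k : ℂ)))
      filter_upwards [eventually_ne_cobounded 0] with z hz
      exact (zpow_mul_transfer_mul_apply_one_zero hz n k _).symm

end transferProd

theorem nlft_a_no_zeros_general (F : ℤ → ℂ) (s : Finset ℤ)
    (hF : ∀ n, ‖F n‖ < 1) :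
    (∀ z : ℂ, 1 < ‖z‖ → nlft F s z 0 0 ≠ 0) ∧
    ∃ L : ℂ, L ≠ 0 ∧
      Filter.Tendsto (fun z => nlft F s z 0 0) (Bornology.cobounded ℂ) (nhds L) := by
  have hsort := s.sortedLT_sort.pairwise
  obtain ⟨n, hn⟩ : ∃ n : ℤ, ∀ k ∈ s.sort (· ≤ ·), n < k := by
    obtain ⟨m, hm⟩ := s.bddBelow
    exact ⟨m - 1, fun k hk => by linarith [hm (Finset.mem_coe.2 ((Finset.mem_sort _).1 hk))]⟩
  refine ⟨fun z hz ha => ?_, _, ?_, (tendsto_transferProd hsort hn).1⟩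
  · have hlt := norm_zpow_mul_transferProd_one_zero_lt hF hz.le (hsort.imp le_of_lt)
      fun k hk => (hn k hk).le
    rw [← nlft_eq_transferProd, ha, norm_zero] at hlt
    exact (norm_nonneg _).not_gt hlt
  · refine List.prod_ne_zero fun h0 => ?_
    obtain ⟨k, -, hk⟩ := List.mem_map.1 h0
    exact (transferScale_pos (hF k)).ne' (Complex.ofReal_eq_zero.1 hk)

/-- For a finitely supported sequence `F` in the open unit disc with nonlinear Fourier
transform `(a, b)`, the function `a` has no zeros in `{|z| > 1}` and no zero at `∞`
(i.e. `a` tends to a nonzero limit as `z → ∞`). -/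
theorem nlft_a_no_zeros (F : ℤ → ℂ) (s : Finset ℤ) (hsupp : ∀ n ∉ s, F n = 0)
    (hF : ∀ n, ‖F n‖ < 1) :
    (∀ z : ℂ, 1 < ‖z‖ → nlft F s z 0 0 ≠ 0) ∧
    ∃ L : ℂ, L ≠ 0 ∧
      Filter.Tendsto (fun z => nlft F s z 0 0) (Bornology.cobounded ℂ) (nhds L) :=
  nlft_a_no_zeros_general F s hF
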